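/- arXiv:2603.22601 — 2 statements merged into one kernel-verified Lean document; each statement's English description precedes it below -/
import Mathlib

section
/- Let Γ be a connected k-regular bipartite graph whose adjacency matrix has exactly four distinct eigenvalues. If Γ has a full indubitable partition corresponding to an eigenvalue λ ≠ −k with multiplicity m, then Γ is isomorphic to the bipartite double of the complete graph K_{m+1}; that is, the adjacency matrix of Γ is permutation-similar to (J₂ − I₂) ⊗ (J_{m+1} − I_{m+1}). -/
open Matrix Finset Kronecker SimpleGraph

/-- The all-ones matrix `J`. -/
def matJ (α β : Type*) : Matrix α β ℝ := Matrix.of fun _ _ => 1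

/-- Hadamard (entrywise) powers of a matrix; the 0-th power is the all-ones matrix `J`. -/
def hadPow {V : Type*} (E : Matrix V V ℝ) : ℕ → Matrix V V ℝ
  | 0 => matJ V V
  | n + 1 => Matrix.hadamard E (hadPow E n)

/-- The idempotent `∘`-algebra `⟨J, E⟩∘`: the linear span over `ℝ` of `J` together with all
Hadamard powers `E, E∘E, E∘E∘E, …` of `E`. -/
noncomputable def hadSpan {V : Type*} (E : Matrix V V ℝ) : Submodule ℝ (Matrix V V ℝ) :=
  Submodule.span ℝ (Set.range (hadPow E))

/-- The adjacency algebra of a graph with adjacency matrix `A`: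
the linear span over `ℝ` of the powers `I, A, A², …` of `A`. -/
noncomputable def adjAlg {V : Type*} [Fintype V] [DecidableEq V] (A : Matrix V V ℝ) :
    Submodule ℝ (Matrix V V ℝ) :=
  Submodule.span ℝ (Set.range fun n : ℕ => A ^ n)

/-- `A` and `B` are permutation-similar: `B = PᵀAP` for a permutation matrix `P`,
i.e. `A` can be obtained from `B` by simultaneous re-indexing of rows and columns
along a bijection of the index types. -/
def PermSimilar {α β : Type*} (A : Matrix α α ℝ) (B : Matrix β β ℝ) : Prop :=
  ∃ e : α ≃ β, ∀ i j, A i j = B (e i) (e j)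

/-- The multiplicity of `μ` as an eigenvalue of the square matrix `A`, i.e. the dimension of
the eigenspace `ker (μ•I − A)`. -/
noncomputable def eigMult {V : Type*} [Fintype V] [DecidableEq V]
    (A : Matrix V V ℝ) (μ : ℝ) : ℕ :=
  Module.finrank ℝ (LinearMap.ker (Matrix.toLin' (μ • (1 : Matrix V V ℝ) - A)))

/-- `E` is the spectral idempotent of `A` for the eigenvalue `μ`: the real symmetric matrix
with `E² = E`, `A·E = μ·E`, and `rank E = dim ker (μI − A)`; equivalently, the matrix of the
orthogonal projection onto the eigenspace `ker (μI − A)`. -/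
def IsSpectralIdempotent {V : Type*} [Fintype V] [DecidableEq V]
    (A E : Matrix V V ℝ) (μ : ℝ) : Prop :=
  E.IsSymm ∧ E * E = E ∧ A * E = μ • E ∧ E.rank = eigMult A μ

open Classical in
/-- The map `c` describes an indubitable partition of `G` with parameters `(a, b)`:
the cells of the partition are the fibers of `c`, and for each cell `P` and each vertex `x`
the number of neighbors of `x` in `P` equals `a` if `x ∈ P` and `b` otherwise. -/
def IsIndubitable {V ι : Type*} (G : SimpleGraph V) (c : V → ι) (a b : ℕ) : Prop :=
  Function.Surjective c ∧
    ∀ (i : ι) (x : V), {y : V | G.Adj x y ∧ c y = i}.ncard = if c x = i then a else b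

/-- `G` has a full indubitable partition corresponding to the eigenvalue `μ` of multiplicity
`m`: an indubitable partition with `m + 1` cells and parameters `(a, b)` with `a − b = μ`. -/
def HasFullIndubitable {V : Type*} (G : SimpleGraph V) (μ : ℝ) (m : ℕ) : Prop :=
  ∃ (c : V → Fin (m + 1)) (a b : ℕ), IsIndubitable G c a b ∧ (a : ℝ) - (b : ℝ) = μ

instance {α β : Type*} [DecidableEq α] [DecidableEq β] (G : SimpleGraph α) (H : SimpleGraph β)
    [DecidableRel G.Adj] [DecidableRel H.Adj] : DecidableRel (G □ H).Adj := fun x y =>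
  inferInstanceAs (Decidable ((G.Adj x.1 y.1 ∧ x.2 = y.2) ∨ (H.Adj x.2 y.2 ∧ x.1 = y.1)))

/-!
Flipping the sign of one colour class conjugates `A` to `-A`, so the spectrum of a bipartite graph
is symmetric, and connectivity makes `k` (hence `-k`) simple. Four distinct eigenvalues therefore
force the spectrum `{k, -k, λ, -λ}` with `λ ≠ 0` (a symmetric finite set containing `0` has odd
size), and `|V| = 2(m + 1)`.

The signed colour vector `s` is a `-k`-eigenvector orthogonal to `𝟙`, and the indicator `χ` of a
cell satisfies `Aχ = λχ + b𝟙`; comparing `sᵀAχ` both ways gives `(λ + k) sᵀχ = 0`, so every cell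
meets both colour classes. Counting vertices, each cell consists of exactly one vertex of each
colour. A vertex then has at most one neighbour in any cell, so `a, b ≤ 1`; with `b ≥ 1`
(connectivity) and `a ≠ b` (`λ ≠ 0`) this gives `a = 0`, `b = 1`, and `x ∼ y` exactly when the
colours and the cells of `x` and `y` both differ.
-/

namespace Matrix

variable {n : Type*} [Fintype n] [DecidableEq n]

lemma eigMult_add_rank (A : Matrix n n ℝ) (μ : ℝ) :
    eigMult A μ + (μ • (1 : Matrix n n ℝ) - A).rank = Fintype.card n := by
  rw [eigMult, add_comm, rank, ← Module.finrank_fintype_fun_eq_card (R := ℝ)]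
  exact LinearMap.finrank_range_add_finrank_ker (toLin' (μ • (1 : Matrix n n ℝ) - A))

lemma eigMult_neg_of_mul_mul_eq_neg {A D : Matrix n n ℝ} (hD : D * D = 1) (hDA : D * A * D = -A)
    (μ : ℝ) : eigMult A (-μ) = eigMult A μ := by
  have hdet : IsUnit D.det := IsUnit.of_mul_eq_one D.det (by rw [← det_mul, hD, det_one])
  have hconj : (-μ) • (1 : Matrix n n ℝ) - A = D * (μ • 1 - A) * -D := by
    rw [mul_neg, Matrix.mul_sub, Matrix.sub_mul, mul_smul_comm, mul_one, smul_mul_assoc, hD, hDA,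
      neg_smul]
    abel
  have hrank : ((-μ) • (1 : Matrix n n ℝ) - A).rank = (μ • (1 : Matrix n n ℝ) - A).rank := by
    rw [hconj, rank_mul_eq_left_of_isUnit_det _ _ (by simpa [det_neg] using hdet),
      rank_mul_eq_right_of_isUnit_det _ _ hdet]
  have h₁ := eigMult_add_rank A μ
  have h₂ := eigMult_add_rank A (-μ)
  omega

omit [DecidableEq n] in
lemma IsSymm.mulVec_dotProduct {A : Matrix n n ℝ} (hA : A.IsSymm) (u w : n → ℝ) :
    (A *ᵥ u) ⬝ᵥ w = u ⬝ᵥ (A *ᵥ w) := by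
  rw [dotProduct_mulVec, ← mulVec_transpose, hA.eq]

namespace IsHermitian

variable {A : Matrix n n ℝ} (hA : A.IsHermitian)
include hA

lemma eigMult_eq_card (μ : ℝ) : eigMult A μ = #{i | hA.eigenvalues i = μ} := by
  have hdiag : μ • (1 : Matrix n n ℝ) - A = Unitary.conjStarAlgAut ℝ _ hA.eigenvectorUnitary
      (diagonal fun i => μ - hA.eigenvalues i) := by
    have : (diagonal fun i => μ - hA.eigenvalues i) = μ • 1 - diagonal hA.eigenvalues := by
      ext i j
      by_cases h : i = j <;> simp [h]
    conv_lhs => rw [hA.spectral_theorem]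
    rw [this, map_sub, map_smul, map_one]
    simp
  have hrank : (μ • (1 : Matrix n n ℝ) - A).rank = #{i | ¬hA.eigenvalues i = μ} := by
    rw [hdiag, Unitary.conjStarAlgAut_apply, ← Unitary.coe_star,
      rank_mul_eq_left_of_isUnit_det _ _ (UnitaryGroup.det_isUnit _),
      rank_mul_eq_right_of_isUnit_det _ _ (UnitaryGroup.det_isUnit _), rank_diagonal,
      Fintype.card_subtype]
    simp only [ne_eq, sub_eq_zero, @eq_comm _ (hA.eigenvalues _)]
  have := eigMult_add_rank A μ
  have := card_filter_add_card_filter_not (s := univ) (fun i => hA.eigenvalues i = μ)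
  simp only [card_univ] at this
  omega

lemma setOf_eigMult_pos : {μ | 0 < eigMult A μ} = ↑(univ.image hA.eigenvalues) := by
  ext μ
  simp [hA.eigMult_eq_card, Finset.card_pos, Finset.filter_nonempty_iff]

lemma sum_eigMult : ∑ μ ∈ univ.image hA.eigenvalues, eigMult A μ = Fintype.card n := by
  simp_rw [hA.eigMult_eq_card]
  exact (card_eq_sum_card_image _ _).symm

end IsHermitian

end Matrix

lemma Finset.zero_notMem_of_even_card_of_neg_mem {T : Finset ℝ} (hT : Even #T)
    (hneg : ∀ μ ∈ T, -μ ∈ T) : (0 : ℝ) ∉ T := by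
  intro h0
  have hpair : ((#(T.erase 0) : ℕ) : ZMod 2) = 0 := by
    rw [card_eq_sum_ones, Nat.cast_sum, Nat.cast_one]
    refine sum_involution (fun μ _ => -μ) (fun _ _ => by decide) (fun μ hμ _ => ?_)
      (fun μ hμ => ?_) (fun μ _ => neg_neg μ)
    · have := ne_of_mem_erase hμ
      intro h
      exact this (by linarith)
    · exact mem_erase.2 ⟨neg_ne_zero.2 (ne_of_mem_erase hμ), hneg μ (mem_of_mem_erase hμ)⟩
  rw [ZMod.natCast_eq_zero_iff_even, card_erase_of_mem h0] at hpair
  have : 0 < #T := card_pos.2 ⟨0, h0⟩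
  obtain ⟨r, hr⟩ := hT
  obtain ⟨q, hq⟩ := hpair
  omega

namespace SimpleGraph

variable {V : Type*} {G : SimpleGraph V}

lemma Preconnected.eq_of_forall_adj {α : Type*} (hconn : G.Preconnected) {f : V → α}
    (hf : ∀ x y, G.Adj x y → f x = f y) (x y : V) : f x = f y := by
  obtain ⟨w⟩ := hconn x y
  induction w with
  | nil => rfl
  | cons hadj _ ih => exact (hf _ _ hadj).trans ih

namespace Coloring

variable (C : G.Coloring (Fin 2))

def sign (x : V) : ℝ := if C x = 0 then 1 else -1

lemma sign_of_adj {x y : V} (h : G.Adj x y) : C.sign y = -C.sign x := by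
  have := C.valid h
  unfold sign
  split_ifs <;> first | omega | norm_num

lemma sign_mul_self (x : V) : C.sign x * C.sign x = 1 := by
  unfold sign
  split_ifs <;> norm_num

lemma exists_mem_eq_of_sum_sign_eq_zero {P : Finset V} (hP : P.Nonempty)
    (hsum : ∑ x ∈ P, C.sign x = 0) (j : Fin 2) : ∃ x ∈ P, C x = j := by
  by_contra! h
  obtain ⟨x₀, hx₀⟩ := hP
  have hconst : ∀ x ∈ P, C.sign x = C.sign x₀ := fun x hx => by
    have : C x = C x₀ := by have := h x hx; have := h x₀ hx₀; omega
    simp [sign, this]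
  rw [sum_congr rfl hconst, sum_const, nsmul_eq_mul] at hsum
  refine mul_ne_zero (by exact_mod_cast (card_pos.2 ⟨x₀, hx₀⟩).ne') ?_ hsum
  exact left_ne_zero_of_mul_eq_one (C.sign_mul_self x₀)

lemma subsingleton_setOf_adj {ι : Type*} {c : V → ι}
    (hinj : Function.Injective fun x => (C x, c x)) (x : V) (i : ι) :
    {y | G.Adj x y ∧ c y = i}.Subsingleton := fun y hy z hz =>
  hinj (Prod.ext (show C y = C z by have := C.valid hy.1; have := C.valid hz.1; omega)
    (hy.2.trans hz.2.symm))

end Coloring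

lemma permSimilar_adjMatrix_of_adj_iff [DecidableRel G.Adj] {α ι : Type*} [DecidableEq α]
    [DecidableEq ι] (e : V ≃ α × ι)
    (h : ∀ x y, G.Adj x y ↔ (e x).1 ≠ (e y).1 ∧ (e x).2 ≠ (e y).2) :
    PermSimilar (G.adjMatrix ℝ) ((matJ α α - 1) ⊗ₖ (matJ ι ι - 1)) := by
  refine ⟨e, fun x y => ?_⟩
  by_cases h₁ : (e x).1 = (e y).1 <;> by_cases h₂ : (e x).2 = (e y).2 <;>
    simp [h, kroneckerMap_apply, matJ, one_apply, h₁, h₂]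

variable [Fintype V] [DecidableRel G.Adj] {k : ℕ}

lemma ncard_setOf_adj_and_le_degree (x : V) (p : V → Prop) :
    {y | G.Adj x y ∧ p y}.ncard ≤ G.degree x := by
  rw [← card_neighborFinset_eq_degree, ← Set.ncard_coe_finset]
  exact Set.ncard_le_ncard (fun y hy => by simpa using hy.1)

lemma IsRegularOfDegree.adjMatrix_mulVec_one (hreg : G.IsRegularOfDegree k) :
    G.adjMatrix ℝ *ᵥ 1 = (k : ℝ) • 1 := by
  ext x
  simpa using adjMatrix_mulVec_const_apply_of_regular (α := ℝ) (a := 1) hreg (v := x)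

lemma Coloring.adjMatrix_mulVec_sign (C : G.Coloring (Fin 2)) (hreg : G.IsRegularOfDegree k) :
    G.adjMatrix ℝ *ᵥ C.sign = (-k : ℝ) • C.sign := by
  ext x
  rw [adjMatrix_mulVec_apply,
    sum_congr rfl fun y hy => C.sign_of_adj ((mem_neighborFinset ..).1 hy), sum_const,
    card_neighborFinset_eq_degree, hreg x]
  simp

variable [DecidableEq V]

lemma IsRegularOfDegree.lapMatrix_eq (hreg : G.IsRegularOfDegree k) :
    G.lapMatrix ℝ = (k : ℝ) • 1 - G.adjMatrix ℝ := by
  rw [lapMatrix, degMatrix, funext fun x => congrArg (Nat.cast (R := ℝ)) (hreg x),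
    ← smul_one_eq_diagonal]

lemma Connected.eigMult_adjMatrix_degree (hconn : G.Connected) (hreg : G.IsRegularOfDegree k) :
    eigMult (G.adjMatrix ℝ) k = 1 := by
  rw [eigMult, ← hreg.lapMatrix_eq, ← card_connectedComponent_eq_finrank_ker_toLin'_lapMatrix]
  have := hconn.preconnected.subsingleton_connectedComponent
  have : Nonempty G.ConnectedComponent := hconn.nonempty.map G.connectedComponentMk
  exact le_antisymm (Fintype.card_le_one_iff_subsingleton.2 ‹_›) Fintype.card_pos

lemma Colorable.eigMult_adjMatrix_neg (hbip : G.Colorable 2) (μ : ℝ) :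
    eigMult (G.adjMatrix ℝ) (-μ) = eigMult (G.adjMatrix ℝ) μ := by
  let C := hbip.some
  refine eigMult_neg_of_mul_mul_eq_neg (D := diagonal C.sign) ?_ ?_ μ
  · rw [diagonal_mul_diagonal, ← diagonal_one]
    exact congrArg diagonal (funext C.sign_mul_self)
  · ext x y
    rw [mul_diagonal, diagonal_mul, neg_apply]
    by_cases h : G.Adj x y
    · simp [h, C.sign_of_adj h, C.sign_mul_self]
    · simp [h]

lemma Connected.card_eq_of_ncard_eigenvalues_eq_four (hconn : G.Connected)
    (hreg : G.IsRegularOfDegree k) (hbip : G.Colorable 2) (hk : k ≠ 0)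
    (h4 : {μ | 0 < eigMult (G.adjMatrix ℝ) μ}.ncard = 4) {lam : ℝ}
    (hlam : 0 < eigMult (G.adjMatrix ℝ) lam) (hlk : lam ≠ k) (hlk' : lam ≠ -k) :
    lam ≠ 0 ∧ Fintype.card V = 2 * (eigMult (G.adjMatrix ℝ) lam + 1) := by
  have hA := isHermitian_adjMatrix (R := ℝ) G
  set T := univ.image hA.eigenvalues
  have hmem (μ : ℝ) : μ ∈ T ↔ 0 < eigMult (G.adjMatrix ℝ) μ := by
    rw [← mem_coe, ← hA.setOf_eigMult_pos]
    rfl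
  have hT : #T = 4 := by rw [← Set.ncard_coe_finset, ← hA.setOf_eigMult_pos, h4]
  have hneg : ∀ μ ∈ T, -μ ∈ T := fun μ => by simp only [hmem, hbip.eigMult_adjMatrix_neg, imp_self]
  have hl0 : lam ≠ 0 := by
    rintro rfl
    exact zero_notMem_of_even_card_of_neg_mem (hT ▸ even_two_mul 2) hneg ((hmem 0).2 hlam)
  have hk1 : eigMult (G.adjMatrix ℝ) k = 1 := hconn.eigMult_adjMatrix_degree hreg
  have hk' : (k : ℝ) ≠ 0 := by exact_mod_cast hk
  have h₁ : (k : ℝ) ∉ ({-(k : ℝ), lam, -lam} : Finset ℝ) := by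
    simp only [mem_insert, mem_singleton, not_or]
    exact ⟨fun h => hk' (by linarith), fun h => hlk h.symm, fun h => hlk' (by linarith)⟩
  have h₂ : -(k : ℝ) ∉ ({lam, -lam} : Finset ℝ) := by
    simp only [mem_insert, mem_singleton, not_or]
    exact ⟨fun h => hlk' h.symm, fun h => hlk (by linarith)⟩
  have h₃ : lam ≠ -lam := fun h => hl0 (by linarith)
  have hTeq : T = {(k : ℝ), -(k : ℝ), lam, -lam} := by
    refine (eq_of_subset_of_card_le (fun μ hμ => ?_) ?_).symm
    · simp only [mem_insert, mem_singleton] at hμ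
      rcases hμ with rfl | rfl | rfl | rfl <;>
        simp [hmem, hbip.eigMult_adjMatrix_neg, hk1, hlam]
    · rw [hT, card_insert_of_notMem h₁, card_insert_of_notMem h₂, card_pair h₃]
  have hsum : ∑ μ ∈ T, eigMult (G.adjMatrix ℝ) μ = Fintype.card V := hA.sum_eigMult
  refine ⟨hl0, ?_⟩
  rw [← hsum, hTeq, sum_insert h₁, sum_insert h₂, sum_pair h₃, hbip.eigMult_adjMatrix_neg,
    hbip.eigMult_adjMatrix_neg, hk1]
  ring

end SimpleGraph

namespace IsIndubitable

variable {V ι : Type*} {G : SimpleGraph V} {c : V → ι} {a b : ℕ} (hc : IsIndubitable G c a b)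
include hc

lemma ncard_self (x : V) : {y | G.Adj x y ∧ c y = c x}.ncard = a := by
  simpa using hc.2 (c x) x

lemma ncard_of_ne {x : V} {i : ι} (h : c x ≠ i) : {y | G.Adj x y ∧ c y = i}.ncard = b := by
  simpa [h] using hc.2 i x

lemma one_le_of_connected [Finite V] [Nontrivial ι] (hconn : G.Connected) : 1 ≤ b := by
  by_contra! hb
  have hadj (x y : V) (hxy : G.Adj x y) : c x = c y := by
    by_contra h
    have := hc.ncard_of_ne h
    rw [Nat.lt_one_iff.1 hb, Set.ncard_eq_zero] at this
    exact this.subset ⟨hxy, rfl⟩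
  obtain ⟨i, j, hij⟩ := exists_pair_ne ι
  obtain ⟨x, rfl⟩ := hc.1 i
  obtain ⟨y, rfl⟩ := hc.1 j
  exact hij (hconn.preconnected.eq_of_forall_adj hadj x y)

lemma sub_lt_degree [Fintype V] [DecidableRel G.Adj] [Nontrivial ι] {k : ℕ}
    (hconn : G.Connected) (hreg : G.IsRegularOfDegree k) : (a : ℝ) - b < k := by
  obtain ⟨x⟩ := hconn.nonempty
  have hak : a ≤ k := hc.ncard_self x ▸ hreg x ▸ ncard_setOf_adj_and_le_degree x _
  have hb : 1 ≤ b := hc.one_le_of_connected hconn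
  have : (a : ℝ) ≤ k := by exact_mod_cast hak
  have : (1 : ℝ) ≤ b := by exact_mod_cast hb
  linarith

lemma adjMatrix_mulVec_indicator [Fintype V] [DecidableRel G.Adj] [DecidableEq ι] (i : ι) :
    G.adjMatrix ℝ *ᵥ (fun y => if c y = i then 1 else 0) =
      fun x => if c x = i then (a : ℝ) else b := by
  ext x
  have : #{y ∈ G.neighborFinset x | c y = i} = {y | G.Adj x y ∧ c y = i}.ncard := by
    rw [← Set.ncard_coe_finset]
    congr
    ext
    simp
  rw [adjMatrix_mulVec_apply, sum_boole, this]
  split_ifs with h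
  · rw [← h, hc.ncard_self]
  · rw [hc.ncard_of_ne h]

lemma sum_sign_eq_zero [Fintype V] [DecidableRel G.Adj] [DecidableEq ι] {k : ℕ}
    (hreg : G.IsRegularOfDegree k) (C : G.Coloring (Fin 2)) (hk : k ≠ 0)
    (hab : (a : ℝ) - b ≠ -k) (i : ι) : ∑ x with c x = i, C.sign x = 0 := by
  set χ : V → ℝ := fun y => if c y = i then 1 else 0
  have hA := isSymm_adjMatrix (α := ℝ) G
  have hs := C.adjMatrix_mulVec_sign hreg
  have hsum : C.sign ⬝ᵥ 1 = 0 := by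
    have := hA.mulVec_dotProduct C.sign 1
    rw [hs, hreg.adjMatrix_mulVec_one, smul_dotProduct, dotProduct_smul, smul_eq_mul,
      smul_eq_mul] at this
    have hk' : (k : ℝ) ≠ 0 := by exact_mod_cast hk
    have : (k : ℝ) * (C.sign ⬝ᵥ 1) = 0 := by linarith
    exact (mul_eq_zero.1 this).resolve_left hk'
  have hχ : G.adjMatrix ℝ *ᵥ χ = ((a : ℝ) - b) • χ + (b : ℝ) • 1 := by
    rw [hc.adjMatrix_mulVec_indicator]
    ext x
    by_cases h : c x = i <;> simp [χ, h]
  have key : (-k : ℝ) * (C.sign ⬝ᵥ χ) = ((a : ℝ) - b) * (C.sign ⬝ᵥ χ) := by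
    have := hA.mulVec_dotProduct C.sign χ
    rwa [hs, hχ, dotProduct_add, dotProduct_smul, dotProduct_smul, hsum, smul_zero, add_zero,
      smul_dotProduct, smul_eq_mul, smul_eq_mul] at this
  have : C.sign ⬝ᵥ χ = 0 := by
    by_contra h
    exact hab (mul_right_cancel₀ h key).symm
  simpa [χ, dotProduct, sum_filter] using this

lemma bijective_color_cell [Fintype V] [DecidableRel G.Adj] [Fintype ι] [DecidableEq ι]
    {k : ℕ} (hreg : G.IsRegularOfDegree k) (C : G.Coloring (Fin 2)) (hk : k ≠ 0)
    (hab : (a : ℝ) - b ≠ -k) (hcard : Fintype.card V = 2 * Fintype.card ι) :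
    Function.Bijective fun x => (C x, c x) := by
  refine (Fintype.bijective_iff_surjective_and_card _).2 ⟨fun ⟨j, i⟩ => ?_, by simp [hcard]⟩
  obtain ⟨x, hx, hCx⟩ := C.exists_mem_eq_of_sum_sign_eq_zero
    (let ⟨x, hx⟩ := hc.1 i; ⟨x, by simp [hx]⟩) (hc.sum_sign_eq_zero hreg C hk hab i) j
  exact ⟨x, Prod.ext hCx (by simpa using hx)⟩

lemma left_eq_zero [Finite V] [Nontrivial ι] (hconn : G.Connected) {C : G.Coloring (Fin 2)}
    (hinj : Function.Injective fun x => (C x, c x)) (hab : (a : ℝ) - b ≠ 0) : a = 0 := by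
  obtain ⟨x⟩ := hconn.nonempty
  obtain ⟨i, hi⟩ : ∃ i, c x ≠ i := (exists_ne (c x)).imp fun _ => Ne.symm
  have := hc.ncard_self x ▸ Set.ncard_le_one_iff_subsingleton.2 (C.subsingleton_setOf_adj hinj x _)
  have := hc.ncard_of_ne hi ▸ Set.ncard_le_one_iff_subsingleton.2 (C.subsingleton_setOf_adj hinj x i)
  have := hc.one_le_of_connected hconn
  have : a ≠ b := fun h => hab (by rw [h, sub_self])
  omega

lemma adj_iff [Finite V] [Nontrivial ι] (hconn : G.Connected) {C : G.Coloring (Fin 2)}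
    (hinj : Function.Injective fun x => (C x, c x)) (ha : a = 0) {x y : V} :
    G.Adj x y ↔ C x ≠ C y ∧ c x ≠ c y := by
  refine ⟨fun h => ⟨C.valid h, fun hxy => ?_⟩, fun ⟨hC, hcxy⟩ => ?_⟩
  · have := hc.ncard_self x
    rw [ha, Set.ncard_eq_zero] at this
    exact this.subset ⟨h, hxy.symm⟩
  · have hb := hc.one_le_of_connected hconn
    obtain ⟨z, hz⟩ := Set.nonempty_of_ncard_ne_zero (by rw [hc.ncard_of_ne hcxy]; omega)
    have : z = y := hinj (Prod.ext (show C z = C y by have := C.valid hz.1; omega) hz.2)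
    exact this ▸ hz.1

end IsIndubitable

/-- Corollary rE. Let `Γ` be a connected `k`-regular bipartite graph with
exactly four distinct eigenvalues. If `Γ` has a full indubitable partition corresponding to an
eigenvalue `λ ≠ −k` of multiplicity `m`, then `Γ` is the bipartite double of `K_{m+1}`: its
adjacency matrix is permutation-similar to `(J₂ − I₂) ⊗ (J_{m+1} − I_{m+1})`. -/
theorem statement17 (v k m : ℕ) (G : SimpleGraph (Fin v)) [DecidableRel G.Adj]
    (hconn : G.Connected) (hreg : G.IsRegularOfDegree k) (hbip : G.Colorable 2)
    (h4 : {mu : ℝ | 0 < eigMult (G.adjMatrix ℝ) mu}.ncard = 4)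
    (lam : ℝ) (hlam : lam ≠ -(k : ℝ))
    (hm : eigMult (G.adjMatrix ℝ) lam = m) (hm0 : 0 < m)
    (hfull : HasFullIndubitable G lam m) :
    PermSimilar (G.adjMatrix ℝ)
      ((matJ (Fin 2) (Fin 2) - 1) ⊗ₖ (matJ (Fin (m + 1)) (Fin (m + 1)) - 1)) := by
  obtain ⟨c, a, b, hc, hab⟩ := hfull
  let C : G.Coloring (Fin 2) := hbip.some
  have : Nontrivial (Fin (m + 1)) := Fin.nontrivial_iff_two_le.2 (by omega)
  have : Nontrivial (Fin v) := hc.1.nontrivial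
  obtain ⟨x₀⟩ := hconn.nonempty
  have hk : k ≠ 0 := (hreg x₀ ▸ hconn.preconnected.degree_pos_of_nontrivial x₀).ne'
  have hlk : lam ≠ k := hab ▸ (hc.sub_lt_degree hconn hreg).ne
  obtain ⟨hl0, hcard⟩ :=
    hconn.card_eq_of_ncard_eigenvalues_eq_four hreg hbip hk h4 (hm ▸ hm0) hlk hlam
  have hbij : Function.Bijective fun x => (C x, c x) :=
    hc.bijective_color_cell hreg C hk (hab ▸ hlam) (by rw [hcard, hm, Fintype.card_fin])
  have ha : a = 0 := hc.left_eq_zero hconn hbij.1 (hab ▸ hl0)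
  exact permSimilar_adjMatrix_of_adj_iff (Equiv.ofBijective _ hbij) fun _ _ =>
    hc.adj_iff hconn hbij.1 ha
end

section
/- Let Γ be a connected bipartite graph having 0 as an eigenvalue of its adjacency matrix. Then Γ does not have a full indubitable partition corresponding to the eigenvalue 0. -/
open Matrix Finset Kronecker SimpleGraph

private lemma exists_adj_of_walk {V : Type*} {G : SimpleGraph V} {x y : V}
    (p : G.Walk x y) (h : x ≠ y) : ∃ u v, G.Adj u v := by
  cases p with
  | nil => exact absurd rfl h
  | cons h' _ => exact ⟨_, _, h'⟩

/-- Proposition nozero. A connected bipartite graph having `0` as an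
eigenvalue does not have a full indubitable partition corresponding to the eigenvalue `0`. -/
theorem statement18 (v m : ℕ) (G : SimpleGraph (Fin v)) [DecidableRel G.Adj]
    (hconn : G.Connected) (hbip : G.Colorable 2)
    (hm : eigMult (G.adjMatrix ℝ) 0 = m) (hm0 : 0 < m) :
    ¬ HasFullIndubitable G 0 m := by
  classical
  rintro ⟨c, a, b, ⟨hsurj, hcount⟩, hab⟩
  have hab' : a = b := by
    have h : (a : ℝ) = b := by linarith
    exact_mod_cast h
  subst hab'
  obtain ⟨col⟩ := hbip
  set A := G.adjMatrix ℝ with hAdef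
  -- sign vector from the 2-coloring
  set s : Fin v → ℝ := fun x => if col x = 0 then 1 else -1 with hsdef
  have hs_ne : ∀ x, s x ≠ 0 := by
    intro x; simp only [hsdef]; split <;> norm_num
  have hfin2 : ∀ u : Fin 2, u = 0 ∨ u = 1 := by decide
  have hs_adj : ∀ {x y}, G.Adj x y → s y = -s x := by
    intro x y hxy
    have hne := col.valid hxy
    simp only [hsdef]
    rcases hfin2 (col x) with h1 | h1 <;> rcases hfin2 (col y) with h2 | h2 <;>
      simp [h1, h2] at hne ⊢
  -- indicator vectors of the cells
  set χ : Fin (m + 1) → Fin v → ℝ := fun i x => if c x = i then 1 else 0 with hχdef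
  -- counting: every vertex has exactly `a` neighbours in every cell
  have hcard : ∀ (i : Fin (m + 1)) (x : Fin v),
      (Finset.univ.filter fun y => G.Adj x y ∧ c y = i).card = a := by
    intro i x
    have h := hcount i x
    rw [ite_self] at h
    have hset : {y : Fin v | G.Adj x y ∧ c y = i}
        = ↑(Finset.univ.filter fun y => G.Adj x y ∧ c y = i) := by
      ext y; simp
    rwa [hset, Set.ncard_coe_finset] at h
  have hkey : ∀ (i : Fin (m + 1)) (x : Fin v),
      ∑ y ∈ Finset.univ.filter (fun y => c y = i), A x y = (a : ℝ) := by
    intro i x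
    have : ∑ y ∈ Finset.univ.filter (fun y => c y = i), A x y
        = ((Finset.univ.filter fun y => G.Adj x y ∧ c y = i).card : ℝ) := by
      rw [Finset.sum_filter]
      rw [show ((Finset.univ.filter fun y => G.Adj x y ∧ c y = i).card : ℝ)
          = ∑ y ∈ Finset.univ.filter (fun y => G.Adj x y ∧ c y = i), (1 : ℝ) by
        simp]
      rw [Finset.sum_filter]
      apply Finset.sum_congr rfl
      intro y _
      by_cases h1 : c y = i <;> by_cases h2 : G.Adj x y <;>
        simp [h1, h2, hAdef]
    rw [this, hcard]
  have hkeyχ : ∀ (i : Fin (m + 1)) (x : Fin v), A.mulVec (χ i) x = (a : ℝ) := by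
    intro i x
    rw [Matrix.mulVec, dotProduct]
    rw [← hkey i x, Finset.sum_filter]
    apply Finset.sum_congr rfl
    intro y _
    simp only [hχdef]
    by_cases h1 : c y = i <;> simp [h1]
  -- the kernel of A
  set K := LinearMap.ker (Matrix.toLin' ((0 : ℝ) • (1 : Matrix (Fin v) (Fin v) ℝ) - A)) with hKdef
  have hKmem : ∀ f : Fin v → ℝ, f ∈ K ↔ A.mulVec f = 0 := by
    intro f
    rw [hKdef, LinearMap.mem_ker, Matrix.toLin'_apply]
    rw [zero_smul, zero_sub, Matrix.neg_mulVec, neg_eq_zero]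
  have hmK : Module.finrank ℝ K = m := hm
  -- the difference vectors
  set w : Fin m → Fin v → ℝ := fun j => χ j.succ - χ 0 with hwdef
  have hwK : ∀ j, w j ∈ K := by
    intro j
    rw [hKmem]
    funext x
    rw [hwdef]
    simp only [Matrix.mulVec_sub, Pi.sub_apply, Pi.zero_apply]
    rw [hkeyχ, hkeyχ]; ring
  -- reps of the cells
  have hrep : ∀ i : Fin (m + 1), c (Function.surjInv hsurj i) = i :=
    fun i => Function.surjInv_eq hsurj i
  have hw_li : LinearIndependent ℝ w := by
    rw [Fintype.linearIndependent_iff]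
    intro g hg j
    have hx := congrFun hg (Function.surjInv hsurj j.succ)
    simp only [Finset.sum_apply, Pi.smul_apply, Pi.zero_apply, hwdef, Pi.sub_apply,
      hχdef, hrep, smul_eq_mul] at hx
    rw [Finset.sum_eq_single j] at hx
    · simpa [Fin.succ_ne_zero j] using hx
    · intro j' _ hj'
      have h1 : ¬ (j.succ = j'.succ) := fun h => hj' (Fin.succ_injective _ h).symm
      have h2 : ¬ (j.succ = (0 : Fin (m+1))) := Fin.succ_ne_zero j
      simp [h1, h2]
    · intro h; exact absurd (Finset.mem_univ j) h
  set W := Submodule.span ℝ (Set.range w) with hWdef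
  have hWK : W ≤ K := by
    rw [hWdef, Submodule.span_le]
    rintro _ ⟨j, rfl⟩
    exact hwK j
  have hWKeq : W = K := by
    apply Submodule.eq_of_le_of_finrank_le hWK
    rw [hmK, hWdef, finrank_span_eq_card hw_li, Fintype.card_fin]
  -- every kernel vector is constant on cells
  have hconstK : ∀ f ∈ K, ∀ x y, c x = c y → f x = f y := by
    intro f hf
    rw [← hWKeq, hWdef] at hf
    induction hf using Submodule.span_induction with
    | mem f hf =>
      obtain ⟨j, rfl⟩ := hf
      intro x y hxy
      simp only [hwdef, Pi.sub_apply, hχdef, hxy]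
    | zero => intro x y _; rfl
    | add f g _ _ hf hg => intro x y hxy; simp only [Pi.add_apply, hf x y hxy, hg x y hxy]
    | smul r f _ hf => intro x y hxy; simp only [Pi.smul_apply, hf x y hxy]
  -- kernel is closed under multiplication by the sign vector
  have hS : ∀ f ∈ K, (fun x => s x * f x) ∈ K := by
    intro f hf
    rw [hKmem] at hf ⊢
    funext x
    have h0 : A.mulVec f x = 0 := congrFun hf x
    rw [Matrix.mulVec, dotProduct] at h0 ⊢
    have : ∀ y, A x y * (s y * f y) = -s x * (A x y * f y) := by
      intro y
      by_cases hxy : G.Adj x y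
      · rw [hs_adj hxy]; ring
      · simp [hAdef, SimpleGraph.adjMatrix_apply, hxy]
    simp only [this, ← Finset.mul_sum, h0, mul_zero, Pi.zero_apply]
  -- hence s itself is constant on cells
  have hs_const : ∀ x y, c x = c y → s x = s y := by
    intro x y hxy
    by_cases h0 : c x = 0
    · have j0 : Fin m := ⟨0, hm0⟩
      have hg := hconstK _ (hS _ (hwK j0)) x y hxy
      have hy0 : c y = 0 := hxy ▸ h0
      have hne : c x ≠ j0.succ := by rw [h0]; exact fun h => (Fin.succ_ne_zero j0) h.symm
      have hne' : c y ≠ j0.succ := by rw [hy0]; exact fun h => (Fin.succ_ne_zero j0) h.symm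
      have hz : ¬ ((0 : Fin (m+1)) = j0.succ) := fun h => Fin.succ_ne_zero j0 h.symm
      simp [hwdef, hχdef, h0, hy0, hne, hne', hz] at hg
      exact hg
    · obtain ⟨j, hj⟩ : ∃ j : Fin m, c x = j.succ := by
        refine ⟨(c x).pred h0, ?_⟩
        exact (Fin.succ_pred (c x) h0).symm
      have hg := hconstK _ (hS _ (hwK j)) x y hxy
      have hy : c y = j.succ := hxy ▸ hj
      have hne : c x ≠ 0 := h0
      have hne' : c y ≠ 0 := by rw [hy]; exact Fin.succ_ne_zero j
      have hz : ¬ (j.succ = (0 : Fin (m+1))) := Fin.succ_ne_zero j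
      simp [hwdef, hχdef, hj, hy, hne', hz] at hg
      exact hg
  -- A.mulVec s is a constant vector
  set ε : Fin (m + 1) → ℝ := fun i => s (Function.surjInv hsurj i) with hεdef
  have hsε : ∀ x, s x = ε (c x) := by
    intro x
    exact hs_const x (Function.surjInv hsurj (c x)) (hrep (c x)).symm
  have hAs : ∀ x, A.mulVec s x = ∑ i, ε i * a := by
    intro x
    rw [Matrix.mulVec, dotProduct]
    rw [show ∑ y, A x y * s y = ∑ y, A x y * ε (c y) from
      Finset.sum_congr rfl fun y _ => by rw [hsε y]]
    rw [← Finset.sum_fiberwise Finset.univ c (fun y => A x y * ε (c y))]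
    apply Finset.sum_congr rfl
    intro i _
    rw [show ∑ y ∈ Finset.univ.filter (fun y => c y = i), A x y * ε (c y)
        = ∑ y ∈ Finset.univ.filter (fun y => c y = i), A x y * ε i by
      apply Finset.sum_congr rfl; intro y hy
      rw [(Finset.mem_filter.mp hy).2]]
    rw [← Finset.sum_mul, hkey i x]; ring
  -- there is an edge
  have j0 : Fin m := ⟨0, hm0⟩
  set x0 := Function.surjInv hsurj 0 with hx0
  set x1 := Function.surjInv hsurj j0.succ with hx1
  have hne01 : x0 ≠ x1 := by
    intro h
    have h1 : c x0 = 0 := hrep 0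
    have h2 : c x1 = j0.succ := hrep j0.succ
    rw [h, h2] at h1
    exact Fin.succ_ne_zero j0 h1
  obtain ⟨p⟩ := hconn.preconnected x0 x1
  obtain ⟨x, y, hxy⟩ : ∃ x y, G.Adj x y := exists_adj_of_walk p hne01
  -- final contradiction
  have hDdef : ∀ z w : Fin v, G.Adj z w → A.mulVec s z = -(∑ u, A z u) * s z := by
    intro z w' _
    rw [Matrix.mulVec, dotProduct]
    rw [show ∑ u, A z u * s u = ∑ u, A z u * (-s z) from
      Finset.sum_congr rfl fun u _ => by
        by_cases hzu : G.Adj z u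
        · rw [hs_adj hzu]
        · simp [hAdef, SimpleGraph.adjMatrix_apply, hzu]]
    rw [← Finset.sum_mul]; ring
  have hDx : (1 : ℝ) ≤ ∑ u, A x u := by
    have h1 : A x y = 1 := by simp [hAdef, hxy]
    calc (1 : ℝ) = A x y := h1.symm
    _ ≤ ∑ u, A x u := Finset.single_le_sum
        (fun u _ => by simp [hAdef, SimpleGraph.adjMatrix_apply]; split <;> norm_num)
        (Finset.mem_univ y)
  have hDy : (1 : ℝ) ≤ ∑ u, A y u := by
    have h1 : A y x = 1 := by simp [hAdef, hxy.symm]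
    calc (1 : ℝ) = A y x := h1.symm
    _ ≤ ∑ u, A y u := Finset.single_le_sum
        (fun u _ => by simp [hAdef, SimpleGraph.adjMatrix_apply]; split <;> norm_num)
        (Finset.mem_univ x)
  have hconst : A.mulVec s x = A.mulVec s y := by rw [hAs, hAs]
  rw [hDdef x y hxy, hDdef y x hxy.symm, hs_adj hxy] at hconst
  have hsum0 : ((∑ u, A x u) + (∑ u, A y u)) * s x = 0 := by linarith
  rcases mul_eq_zero.mp hsum0 with h | h
  · linarith
  · exact hs_ne x h
end
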